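/- Define the first-order differential operators D̄^l = Σ_k g^{l̄k} ∂/∂z^k acting on smooth functions, where g^{l̄k} is the inverse of g_{k l̄} = ∂²Φ/∂z^k∂z̄^l. Then the operators D̄^l pairwise commute: D̄^l D̄^q f = D̄^q D̄^l f for every smooth function f and all l, q. -/

import Mathlib

open Complex

noncomputable section

/-- The ring of ℂ-valued functions on ℂⁿ (identified with maps `(Fin n → ℂ) → ℂ`). -/
abbrev Cf (n : ℕ) := (Fin n → ℂ) → ℂ

/-- Wirtinger derivative ∂/∂z^k = (∂/∂x^k − i ∂/∂y^k)/2. -/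
noncomputable def dz {n : ℕ} (k : Fin n) (f : Cf n) : Cf n := fun z =>
  (1 / 2 : ℂ) * (fderiv ℝ f z (Pi.single k 1) - Complex.I * fderiv ℝ f z (Pi.single k Complex.I))

/-- Wirtinger derivative ∂/∂z̄^l = (∂/∂x^l + i ∂/∂y^l)/2. -/
noncomputable def dzbar {n : ℕ} (l : Fin n) (f : Cf n) : Cf n := fun z =>
  (1 / 2 : ℂ) * (fderiv ℝ f z (Pi.single l 1) + Complex.I * fderiv ℝ f z (Pi.single l Complex.I))


/-- The operator D̄^l = g^{l̄k} ∂/∂z^k. -/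
noncomputable def Dbarup {n : ℕ} (ginv : Fin n → Fin n → Cf n) (l : Fin n) (f : Cf n) : Cf n :=
  fun z => ∑ k, ginv l k z * dz k f z

/-! ### Auxiliary lemmas -/

variable {n : ℕ} {M : Set (Fin n → ℂ)}

lemma contDiffOn_fderiv_apply (hM : IsOpen M) {f : Cf n} (hf : ContDiffOn ℝ (⊤ : ℕ∞) f M)
    (v : Fin n → ℂ) : ContDiffOn ℝ (⊤ : ℕ∞) (fun z => fderiv ℝ f z v) M :=
  (hf.fderiv_of_isOpen hM (by simp)).clm_apply contDiffOn_const

lemma contDiffOn_dz (hM : IsOpen M) {f : Cf n} (hf : ContDiffOn ℝ (⊤ : ℕ∞) f M) (k : Fin n) :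
    ContDiffOn ℝ (⊤ : ℕ∞) (dz k f) M := by
  unfold dz
  exact contDiffOn_const.mul ((contDiffOn_fderiv_apply hM hf _).sub
    (contDiffOn_const.mul (contDiffOn_fderiv_apply hM hf _)))

lemma contDiffOn_dzbar (hM : IsOpen M) {f : Cf n} (hf : ContDiffOn ℝ (⊤ : ℕ∞) f M) (k : Fin n) :
    ContDiffOn ℝ (⊤ : ℕ∞) (dzbar k f) M := by
  unfold dzbar
  exact contDiffOn_const.mul ((contDiffOn_fderiv_apply hM hf _).add
    (contDiffOn_const.mul (contDiffOn_fderiv_apply hM hf _)))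

lemma dz_congr (hM : IsOpen M) {f g : Cf n} (h : ∀ w ∈ M, f w = g w) {z : Fin n → ℂ}
    (hz : z ∈ M) (k : Fin n) : dz k f z = dz k g z := by
  have he : f =ᶠ[nhds z] g := Filter.eventuallyEq_of_mem (hM.mem_nhds hz) h
  unfold dz
  rw [he.fderiv_eq]

lemma diffAt (hM : IsOpen M) {f : Cf n} (hf : ContDiffOn ℝ (⊤ : ℕ∞) f M) {z : Fin n → ℂ}
    (hz : z ∈ M) : DifferentiableAt ℝ f z :=
  (hf.differentiableOn (by simp)).differentiableAt (hM.mem_nhds hz)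

lemma dz_const (k : Fin n) (c : ℂ) (z : Fin n → ℂ) : dz k (fun _ => c) z = 0 := by
  simp [dz]

lemma dz_mul {f g : Cf n} {z : Fin n → ℂ} (hf : DifferentiableAt ℝ f z)
    (hg : DifferentiableAt ℝ g z) (k : Fin n) :
    dz k (fun w => f w * g w) z = dz k f z * g z + f z * dz k g z := by
  unfold dz
  rw [fderiv_fun_mul hf hg]
  simp only [ContinuousLinearMap.add_apply, ContinuousLinearMap.smul_apply, smul_eq_mul]
  ring

lemma dz_const_mul {g : Cf n} {z : Fin n → ℂ} (hg : DifferentiableAt ℝ g z) (c : ℂ) (k : Fin n) :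
    dz k (fun w => c * g w) z = c * dz k g z := by
  unfold dz
  rw [fderiv_const_mul hg]
  simp only [ContinuousLinearMap.smul_apply, smul_eq_mul]
  ring

lemma dz_sub {f g : Cf n} {z : Fin n → ℂ} (hf : DifferentiableAt ℝ f z)
    (hg : DifferentiableAt ℝ g z) (k : Fin n) :
    dz k (fun w => f w - g w) z = dz k f z - dz k g z := by
  unfold dz
  rw [fderiv_fun_sub hf hg]
  simp only [ContinuousLinearMap.sub_apply]
  ring

lemma dz_sum {ι : Type*} (s : Finset ι) (F : ι → Cf n) {z : Fin n → ℂ}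
    (h : ∀ i ∈ s, DifferentiableAt ℝ (F i) z) (k : Fin n) :
    dz k (fun w => ∑ i ∈ s, F i w) z = ∑ i ∈ s, dz k (F i) z := by
  unfold dz
  rw [fderiv_fun_sum h]
  simp only [ContinuousLinearMap.sum_apply]
  rw [Finset.mul_sum, ← Finset.sum_sub_distrib, Finset.mul_sum]

lemma T_symm (hM : IsOpen M) {f : Cf n} (hf : ContDiffOn ℝ (⊤ : ℕ∞) f M) {z : Fin n → ℂ}
    (hz : z ∈ M) (u v : Fin n → ℂ) :
    fderiv ℝ (fun w => fderiv ℝ f w v) z u = fderiv ℝ (fun w => fderiv ℝ f w u) z v := by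
  have hat : ContDiffAt ℝ (⊤ : ℕ∞) f z := hf.contDiffAt (hM.mem_nhds hz)
  have hsym : IsSymmSndFDerivAt ℝ f z := hat.isSymmSndFDerivAt (by rw [minSmoothness_of_isRCLikeNormedField]; show ((2 : ℕ∞) : WithTop ℕ∞) ≤ ((⊤ : ℕ∞) : WithTop ℕ∞); exact WithTop.coe_le_coe.2 le_top)
  have hdf : DifferentiableAt ℝ (fderiv ℝ f) z := by
    have := (hf.fderiv_of_isOpen hM (m := (⊤ : ℕ∞)) (by simp)).differentiableOn (by simp)
    exact this.differentiableAt (hM.mem_nhds hz)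
  have key : ∀ a b : Fin n → ℂ, fderiv ℝ (fun w => fderiv ℝ f w b) z a
      = fderiv ℝ (fderiv ℝ f) z a b := by
    intro a b
    rw [fderiv_clm_apply hdf (differentiableAt_const b)]
    simp
  rw [key, key, hsym.eq]

lemma dz_dz_comm (hM : IsOpen M) {f : Cf n} (hf : ContDiffOn ℝ (⊤ : ℕ∞) f M) {z : Fin n → ℂ}
    (hz : z ∈ M) (j k : Fin n) : dz j (dz k f) z = dz k (dz j f) z := by
  have hdA : ∀ v, DifferentiableAt ℝ (fun w => fderiv ℝ f w v) z :=
    fun v => diffAt hM (contDiffOn_fderiv_apply hM hf v) hz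
  have expand : ∀ j k : Fin n, dz j (dz k f) z = (1/2 : ℂ) *
      ((1/2 : ℂ) * (fderiv ℝ (fun w => fderiv ℝ f w (Pi.single k 1)) z (Pi.single j 1)
        - I * fderiv ℝ (fun w => fderiv ℝ f w (Pi.single k 1)) z (Pi.single j I))
      - I * ((1/2 : ℂ) * (fderiv ℝ (fun w => fderiv ℝ f w (Pi.single k I)) z (Pi.single j 1)
        - I * fderiv ℝ (fun w => fderiv ℝ f w (Pi.single k I)) z (Pi.single j I)))) := by
    intro j k
    have h1 : dz j (dz k f) z = dz j (fun w => (1/2 : ℂ) *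
        ((fun w => fderiv ℝ f w (Pi.single k 1)) w
          - (fun w => I * fderiv ℝ f w (Pi.single k I)) w)) z := rfl
    rw [h1, dz_const_mul (g := fun w => (fun w => fderiv ℝ f w (Pi.single k 1)) w
        - (fun w => I * fderiv ℝ f w (Pi.single k I)) w) (((hdA _).sub ((hdA _).const_mul I))),
      dz_sub (hdA _) ((hdA _).const_mul I),
      dz_const_mul (hdA _) I]
    simp only [dz]
  rw [expand, expand, T_symm hM hf hz (Pi.single j 1) (Pi.single k 1),
    T_symm hM hf hz (Pi.single j I) (Pi.single k 1),
    T_symm hM hf hz (Pi.single j 1) (Pi.single k I),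
    T_symm hM hf hz (Pi.single j I) (Pi.single k I)]
  ring

lemma contDiffOn_finprod {ι : Type*} (s : Finset ι) (F : ι → Cf n)
    (h : ∀ i ∈ s, ContDiffOn ℝ (⊤ : ℕ∞) (F i) M) :
    ContDiffOn ℝ (⊤ : ℕ∞) (fun z => ∏ i ∈ s, F i z) M := by
  classical
  induction s using Finset.induction_on with
  | empty => simpa using contDiffOn_const
  | @insert a s' hni ih =>
    simp only [Finset.prod_insert hni]
    exact (h a (Finset.mem_insert_self a s')).mul
      (ih fun i hi => h i (Finset.mem_insert_of_mem hi))

lemma contDiffOn_det (A : (Fin n → ℂ) → Matrix (Fin n) (Fin n) ℂ)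
    (h : ∀ i j, ContDiffOn ℝ (⊤ : ℕ∞) (fun z => A z i j) M) :
    ContDiffOn ℝ (⊤ : ℕ∞) (fun z => (A z).det) M := by
  simp only [Matrix.det_apply]
  apply ContDiffOn.sum
  intro σ _
  simp only [Units.smul_def, zsmul_eq_mul]
  exact contDiffOn_const.mul (contDiffOn_finprod _ _ fun i _ => h (σ i) i)

lemma contDiffOn_adjugate (A : (Fin n → ℂ) → Matrix (Fin n) (Fin n) ℂ)
    (h : ∀ i j, ContDiffOn ℝ (⊤ : ℕ∞) (fun z => A z i j) M) (i j : Fin n) :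
    ContDiffOn ℝ (⊤ : ℕ∞) (fun z => (A z).adjugate i j) M := by
  simp only [Matrix.adjugate_apply]
  apply contDiffOn_det
  intro a b
  simp only [Matrix.updateRow_apply]
  by_cases hab : a = j <;> simp only [hab, if_pos, if_neg, ite_true, ite_false]
  · exact contDiffOn_const
  · exact h a b

lemma contDiffOn_inv_entry (A : (Fin n → ℂ) → Matrix (Fin n) (Fin n) ℂ)
    (h : ∀ i j, ContDiffOn ℝ (⊤ : ℕ∞) (fun z => A z i j) M)
    (hdet : ∀ z ∈ M, (A z).det ≠ 0) (i j : Fin n) :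
    ContDiffOn ℝ (⊤ : ℕ∞) (fun z => (A z)⁻¹ i j) M := by
  have : ∀ z, (A z)⁻¹ i j = ((A z).det)⁻¹ * (A z).adjugate i j := by
    intro z
    rw [Matrix.inv_def, Matrix.smul_apply, Ring.inverse_eq_inv, smul_eq_mul]
  simp only [this]
  exact ((contDiffOn_det A h).inv hdet).mul (contDiffOn_adjugate A h i j)

lemma A2_symm (H Q : Fin n → Fin n → ℂ) (hQ : ∀ k p, Q k p = Q p k) (l q : Fin n) :
    ∑ k, ∑ p, H l k * H q p * Q k p = ∑ k, ∑ p, H q k * H l p * Q k p := by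
  rw [Finset.sum_comm]
  exact Finset.sum_congr rfl fun k _ => Finset.sum_congr rfl fun p _ => by rw [hQ]; ring

lemma A1_symm (H : Fin n → Fin n → ℂ) (Gd : Fin n → Fin n → Fin n → ℂ) (P : Fin n → ℂ)
    (hGd : ∀ k a b, Gd k a b = Gd a k b) (l q : Fin n) :
    ∑ k, ∑ p, ∑ a, ∑ b, H l k * H q a * Gd k a b * H b p * P p
    = ∑ k, ∑ p, ∑ a, ∑ b, H q k * H l a * Gd k a b * H b p * P p := by
  have r1 : ∀ l q : Fin n, ∑ k, ∑ p, ∑ a, ∑ b : Fin n, H l k * H q a * Gd k a b * H b p * P p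
      = ∑ k, ∑ a, ∑ p, ∑ b : Fin n, H l k * H q a * Gd k a b * H b p * P p := by
    intro l q
    exact Finset.sum_congr rfl fun k _ => Finset.sum_comm
  rw [r1, r1, Finset.sum_comm]
  exact Finset.sum_congr rfl fun k _ => Finset.sum_congr rfl fun a _ =>
    Finset.sum_congr rfl fun p _ => Finset.sum_congr rfl fun b _ => by rw [hGd]; ring

set_option maxHeartbeats 1000000 in
/-- The operators D̄^l pairwise commute. -/
theorem stmt2 {n : ℕ} (M : Set (Fin n → ℂ)) (hM : IsOpen M) (Φ : Cf n)
    (hΦ : ContDiffOn ℝ (⊤ : ℕ∞) Φ M)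
    (ginv : Fin n → Fin n → Cf n)
    (hinv1 : ∀ l q : Fin n, ∀ z ∈ M,
      (∑ k, ginv l k z * dz k (dzbar q Φ) z) = if l = q then 1 else 0)
    (hinv2 : ∀ k p : Fin n, ∀ z ∈ M,
      (∑ l, dz k (dzbar l Φ) z * ginv l p z) = if k = p then 1 else 0)
    (l q : Fin n) (f : Cf n) (hf : ContDiffOn ℝ (⊤ : ℕ∞) f M) (z : Fin n → ℂ) (hz : z ∈ M) :
    Dbarup ginv l (Dbarup ginv q f) z = Dbarup ginv q (Dbarup ginv l f) z := by
  classical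
  set g : Fin n → Fin n → Cf n := fun a b => dz a (dzbar b Φ) with hgdef
  have hgC : ∀ a b, ContDiffOn ℝ (⊤ : ℕ∞) (g a b) M := fun a b =>
    contDiffOn_dz hM (contDiffOn_dzbar hM hΦ b) a
  set Gm : (Fin n → ℂ) → Matrix (Fin n) (Fin n) ℂ :=
    fun w => Matrix.of fun a b => g a b w with hGmdef
  have hright : ∀ w ∈ M, Gm w * (Matrix.of fun a b => ginv a b w) = 1 := by
    intro w hw; ext a c
    simp only [Matrix.mul_apply, Matrix.of_apply, Matrix.one_apply, hGmdef]
    exact hinv2 a c w hw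
  have hdet : ∀ w ∈ M, (Gm w).det ≠ 0 := by
    intro w hw
    have h1 : (Gm w).det * (Matrix.of fun a b => ginv a b w).det = 1 := by
      rw [← Matrix.det_mul, hright w hw, Matrix.det_one]
    intro h0; rw [h0, zero_mul] at h1; exact absurd h1 (by norm_num)
  have hunit : ∀ w ∈ M, IsUnit (Gm w).det := fun w hw => isUnit_iff_ne_zero.2 (hdet w hw)
  set h : Fin n → Fin n → Cf n := fun a b w => (Gm w)⁻¹ a b with hhdef
  have hge : ∀ w ∈ M, ∀ a b, ginv a b w = h a b w := by
    intro w hw a b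
    have e := Matrix.inv_eq_right_inv (hright w hw)
    show ginv a b w = (Gm w)⁻¹ a b
    rw [e]; rfl
  have hhC : ∀ a b, ContDiffOn ℝ (⊤ : ℕ∞) (h a b) M := fun a b =>
    contDiffOn_inv_entry Gm (fun i j => hgC i j) hdet a b
  have hid1 : ∀ w ∈ M, ∀ a c, (∑ k, h a k w * g k c w) = if a = c then (1:ℂ) else 0 := by
    intro w hw a c
    calc (∑ k, h a k w * g k c w) = ∑ k, (Gm w)⁻¹ a k * Gm w k c := rfl
      _ = ((Gm w)⁻¹ * Gm w) a c := (Matrix.mul_apply).symm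
      _ = (1 : Matrix (Fin n) (Fin n) ℂ) a c := by rw [Matrix.nonsing_inv_mul _ (hunit w hw)]
      _ = if a = c then (1:ℂ) else 0 := Matrix.one_apply
  have hid2 : ∀ w ∈ M, ∀ a c, (∑ k, g a k w * h k c w) = if a = c then (1:ℂ) else 0 := by
    intro w hw a c
    calc (∑ k, g a k w * h k c w) = ∑ k, Gm w a k * (Gm w)⁻¹ k c := rfl
      _ = (Gm w * (Gm w)⁻¹) a c := (Matrix.mul_apply).symm
      _ = (1 : Matrix (Fin n) (Fin n) ℂ) a c := by rw [Matrix.mul_nonsing_inv _ (hunit w hw)]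
      _ = if a = c then (1:ℂ) else 0 := Matrix.one_apply
  have hfC : ∀ p, ContDiffOn ℝ (⊤ : ℕ∞) (dz p f) M := fun p => contDiffOn_dz hM hf p
  -- derivative of the inverse
  have dzh : ∀ (k q' p : Fin n), dz k (h q' p) z
      = -∑ a, ∑ b, h q' a z * dz k (g a b) z * h b p z := by
    intro k q' p
    have base : ∀ c, (∑ a, (dz k (h q' a) z * g a c z + h q' a z * dz k (g a c) z)) = 0 := by
      intro c
      have e1 : dz k (fun w => ∑ a, h q' a w * g a c w) z
          = ∑ a, (dz k (h q' a) z * g a c z + h q' a z * dz k (g a c) z) := by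
        rw [dz_sum Finset.univ (fun a => fun w => h q' a w * g a c w)
          (fun a _ => ((diffAt hM (hhC q' a) hz).mul (diffAt hM (hgC a c) hz))) k]
        exact Finset.sum_congr rfl fun a _ =>
          dz_mul (diffAt hM (hhC q' a) hz) (diffAt hM (hgC a c) hz) k
      have e2 : dz k (fun w => ∑ a, h q' a w * g a c w) z
          = dz k (fun _ => if q' = c then (1:ℂ) else 0) z :=
        dz_congr hM (fun w hw => hid1 w hw q' c) hz k
      rw [← e1, e2, dz_const]
    have e3 : ∀ c, ∑ a, dz k (h q' a) z * g a c z = -∑ a, h q' a z * dz k (g a c) z := by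
      intro c
      have hb := base c
      rw [Finset.sum_add_distrib] at hb
      linear_combination hb
    calc dz k (h q' p) z = ∑ a, (if a = p then dz k (h q' a) z else 0) := by
          rw [Finset.sum_ite_eq' Finset.univ p (fun a => dz k (h q' a) z)]
          simp
      _ = ∑ a, dz k (h q' a) z * (if a = p then (1:ℂ) else 0) :=
          Finset.sum_congr rfl fun a _ => by by_cases hap : a = p <;> simp [hap]
      _ = ∑ a, dz k (h q' a) z * (∑ b, g a b z * h b p z) :=
          Finset.sum_congr rfl fun a _ => by rw [hid2 z hz a p]
      _ = ∑ b, (∑ a, dz k (h q' a) z * g a b z) * h b p z := by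
          simp only [Finset.mul_sum, Finset.sum_mul]
          rw [Finset.sum_comm]
          exact Finset.sum_congr rfl fun b _ => Finset.sum_congr rfl fun a _ => by ring
      _ = ∑ b, (-∑ a, h q' a z * dz k (g a b) z) * h b p z :=
          Finset.sum_congr rfl fun b _ => by rw [e3 b]
      _ = -∑ a, ∑ b, h q' a z * dz k (g a b) z * h b p z := by
          simp only [neg_mul, Finset.sum_mul, Finset.sum_neg_distrib]
          rw [neg_inj, Finset.sum_comm]
  -- expansion of the double operator
  have expand : ∀ l' q' : Fin n, Dbarup ginv l' (Dbarup ginv q' f) z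
      = (-∑ k, ∑ p, ∑ a, ∑ b, h l' k z * h q' a z * dz k (g a b) z * h b p z * dz p f z)
        + ∑ k, ∑ p, h l' k z * h q' p z * dz k (dz p f) z := by
    intro l' q'
    have step1 : Dbarup ginv l' (Dbarup ginv q' f) z
        = ∑ k, h l' k z * dz k (Dbarup h q' f) z := by
      unfold Dbarup
      refine Finset.sum_congr rfl fun k _ => ?_
      rw [hge z hz l' k]
      congr 1
      refine dz_congr hM (fun w hw => ?_) hz k
      exact Finset.sum_congr rfl fun p _ => by rw [hge w hw q' p]
    have step2 : ∀ k : Fin n, dz k (Dbarup h q' f) z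
        = ∑ p, (dz k (h q' p) z * dz p f z + h q' p z * dz k (dz p f) z) := by
      intro k
      unfold Dbarup
      rw [dz_sum Finset.univ (fun p => fun w => h q' p w * dz p f w)
        (fun p _ => (diffAt hM (hhC q' p) hz).mul (diffAt hM (hfC p) hz)) k]
      exact Finset.sum_congr rfl fun p _ =>
        dz_mul (diffAt hM (hhC q' p) hz) (diffAt hM (hfC p) hz) k
    rw [step1]
    simp only [step2, dzh]
    simp only [Finset.mul_sum, mul_add, Finset.sum_add_distrib, neg_mul, mul_neg,
      Finset.sum_neg_distrib, Finset.sum_mul]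
    congr 1
    · rw [neg_inj]
      refine Finset.sum_congr rfl fun k _ => Finset.sum_congr rfl fun p _ => ?_
      refine Finset.sum_congr rfl fun a _ => Finset.sum_congr rfl fun b _ => by ring
    · exact Finset.sum_congr rfl fun k _ => Finset.sum_congr rfl fun p _ => by ring
  rw [expand l q, expand q l]
  have hGd : ∀ k a b : Fin n, dz k (g a b) z = dz a (g k b) z := fun k a b =>
    dz_dz_comm hM (contDiffOn_dzbar hM hΦ b) hz k a
  have hQ : ∀ k p : Fin n, dz k (dz p f) z = dz p (dz k f) z := fun k p =>
    dz_dz_comm hM hf hz k p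
  refine congrArg₂ (· + ·) ?_ ?_
  · refine neg_inj.mpr ?_
    exact A1_symm (fun a b => h a b z) (fun k a b => dz k (g a b) z) (fun p => dz p f z) hGd l q
  · exact A2_symm (fun a b => h a b z) (fun k p => dz k (dz p f) z) hQ l q
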